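/- arXiv:1708.01744 — 2 statements merged into one kernel-verified Lean document; each statement's English description precedes it below -/
import Mathlib

section
/- Consider Discounted HEDGE with K ≥ 1 experts, β ∈ (0,1), γ ∈ (0,1], initial weights w_k[1] = W > 0 for all k, losses l^{(k)}[n] ∈ [0,1], weight recurrence w_k[n+1] = (w_k[n])^{γ} · β^{l^{(k)}[n]}, probabilities p^{(k)}[n] = (w_k[n])^{γ} / Σ_{j=1}^{K} (w_j[n])^{γ}, expert losses L_{k,N}(γ) = Σ_{n=1}^{N} γ^{N−n} l^{(k)}[n], and predictor loss L_N(γ) = Σ_{n=1}^{N} γ^{N−n} Σ_{k=1}^{K} p^{(k)}[n] l^{(k)}[n]. Assume the anti-monotonicity condition: for every n and all j, k, if w_j[n] ≤ w_k[n] then l^{(j)}[n] ≥ l^{(k)}[n]. Then for every expert k* (in particular the one minimizing L_{k,N}(γ)) and every N ≥ 1, L_N(γ) ≤ (ln(1/β)/(1−β)) · L_{k*,N}(γ) + (ln K)/(1−β). -/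
/-!
The potential `Φ n = ∑ₖ w_k[n]` controls both sides. Since `x ↦ x ^ γ` is concave and
`β ^ l ≤ 1 - (1 - β) l` on `[0, 1]`, one step gives
`log (Φ (n+1) / K) ≤ γ log (Φ n / K) - (1 - β) ℓ̂ n`,
where `ℓ̂ n` is the predictor's instantaneous loss; unrolling,
`log (Φ (N+1) / K) ≤ γ ^ N log W - (1 - β) L_N(γ)`. On the other hand `Φ (N+1)` dominates the
single weight `w_{k*}[N+1]`, whose logarithm is exactly `γ ^ N log W - log (1/β) L_{k*,N}(γ)`.
-/

open Finset Real

section Discounting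

def discountedSum (γ : ℝ) (x : ℕ → ℝ) (N : ℕ) : ℝ :=
  ∑ n ∈ Icc 1 N, γ ^ (N - n) * x n

variable {γ : ℝ} {x : ℕ → ℝ}

@[simp]
lemma discountedSum_zero : discountedSum γ x 0 = 0 := by
  simp [discountedSum]

lemma discountedSum_succ (N : ℕ) :
    discountedSum γ x (N + 1) = γ * discountedSum γ x N + x (N + 1) := by
  rw [discountedSum, sum_Icc_succ_top (Nat.le_add_left 1 N), Nat.sub_self, pow_zero, one_mul,
    discountedSum, mul_sum]
  congr 1
  refine sum_congr rfl fun n hn => ?_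
  rw [Nat.sub_add_comm (mem_Icc.mp hn).2, pow_succ]
  ring

lemma discountedSum_const_mul (c : ℝ) (N : ℕ) :
    discountedSum γ (fun n => c * x n) N = c * discountedSum γ x N := by
  rw [discountedSum, discountedSum, mul_sum]
  exact sum_congr rfl fun n _ => mul_left_comm _ _ _

lemma le_pow_mul_add_discountedSum {ψ : ℕ → ℝ} (hγ : 0 ≤ γ)
    (hstep : ∀ n, 1 ≤ n → ψ (n + 1) ≤ γ * ψ n + x n) (N : ℕ) :
    ψ (N + 1) ≤ γ ^ N * ψ 1 + discountedSum γ x N := by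
  induction N with
  | zero => simp
  | succ N ih =>
    calc ψ (N + 1 + 1) ≤ γ * ψ (N + 1) + x (N + 1) := hstep (N + 1) (Nat.le_add_left 1 N)
      _ ≤ γ * (γ ^ N * ψ 1 + discountedSum γ x N) + x (N + 1) := by gcongr
      _ = γ ^ (N + 1) * ψ 1 + discountedSum γ x (N + 1) := by
        rw [discountedSum_succ, pow_succ]
        ring

end Discounting

section MeanInequalities

variable {ι : Type*} {s : Finset ι}

lemma Real.rpow_le_one_sub_mul {β x : ℝ} (hβ : 0 ≤ β) (hx₀ : 0 ≤ x) (hx₁ : x ≤ 1) :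
    β ^ x ≤ 1 - (1 - β) * x := by
  have h := rpow_one_add_le_one_add_mul_self (s := β - 1) (by linarith) hx₀ hx₁
  rw [add_sub_cancel] at h
  linarith

lemma log_sum_rpow_le (hs : s.Nonempty) {x : ι → ℝ} (hx : ∀ i ∈ s, 0 < x i) {γ : ℝ}
    (hγ₀ : 0 < γ) (hγ₁ : γ ≤ 1) :
    log (∑ i ∈ s, x i ^ γ) ≤ γ * log (∑ i ∈ s, x i) + (1 - γ) * log #s := by
  have hsum : 0 < ∑ i ∈ s, x i := sum_pos hx hs
  have hsum_pow : 0 < ∑ i ∈ s, x i ^ γ := sum_pos (fun i hi => rpow_pos_of_pos (hx i hi) γ) hs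
  have hcard : (0 : ℝ) < #s := by exact_mod_cast hs.card_pos
  -- the power-sum inequality for the exponent `γ⁻¹ ≥ 1`, applied to the numbers `x i ^ γ`
  have hpowsum := rpow_sum_le_const_mul_sum_rpow_of_nonneg (s := s) (f := fun i => x i ^ γ)
    (one_le_inv₀ hγ₀ |>.mpr hγ₁) (fun i hi => (rpow_pos_of_pos (hx i hi) γ).le)
  rw [sum_congr rfl fun i hi => rpow_rpow_inv (hx i hi).le hγ₀.ne'] at hpowsum
  have hlog := log_le_log (rpow_pos_of_pos hsum_pow _) hpowsum
  rw [log_rpow hsum_pow, log_mul (rpow_pos_of_pos hcard _).ne' hsum.ne',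
    log_rpow hcard] at hlog
  have := mul_le_mul_of_nonneg_left hlog hγ₀.le
  field_simp at this
  linarith

noncomputable def mixtureLoss (s : Finset ι) (v l : ι → ℝ) : ℝ :=
  ∑ k ∈ s, (v k / ∑ j ∈ s, v j) * l k

lemma log_sum_mul_rpow_le (hs : s.Nonempty) {v l : ι → ℝ} (hv : ∀ k ∈ s, 0 < v k)
    (hl : ∀ k ∈ s, l k ∈ Set.Icc (0 : ℝ) 1) {β : ℝ} (hβ : 0 < β) :
    log (∑ k ∈ s, v k * β ^ l k) ≤
      log (∑ k ∈ s, v k) - (1 - β) * mixtureLoss s v l := by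
  set S := ∑ k ∈ s, v k
  set Y := ∑ k ∈ s, v k * β ^ l k
  have hS : 0 < S := sum_pos hv hs
  have hY : 0 < Y := sum_pos (fun k hk => mul_pos (hv k hk) (rpow_pos_of_pos hβ _)) hs
  have hmix : mixtureLoss s v l = (∑ k ∈ s, v k * l k) / S := by
    rw [mixtureLoss, sum_div]
    exact sum_congr rfl fun k _ => div_mul_eq_mul_div _ _ _
  have hbern : Y ≤ S - (1 - β) * ∑ k ∈ s, v k * l k :=
    calc Y ≤ ∑ k ∈ s, v k * (1 - (1 - β) * l k) := sum_le_sum fun k hk => by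
          gcongr
          · exact (hv k hk).le
          · exact rpow_le_one_sub_mul hβ.le (hl k hk).1 (hl k hk).2
      _ = S - (1 - β) * ∑ k ∈ s, v k * l k := by
        rw [mul_sum, ← sum_sub_distrib]
        exact sum_congr rfl fun k _ => by ring
  have hratio : Y / S - 1 ≤ -((1 - β) * mixtureLoss s v l) := by
    rw [hmix, div_sub_one hS.ne', mul_div_assoc', ← neg_div, div_le_div_iff_of_pos_right hS]
    linarith
  calc log Y = log S + log (Y / S) := by rw [log_div hY.ne' hS.ne']; ring
    _ ≤ log S + (Y / S - 1) := by gcongr; exact log_le_sub_one_of_pos (div_pos hY hS)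
    _ ≤ log S - (1 - β) * mixtureLoss s v l := by linarith

end MeanInequalities

section Hedge

variable {β γ : ℝ}

lemma hedge_weight_pos {u l : ℕ → ℝ} (hβ : 0 < β) (hu : 0 < u 1)
    (hrec : ∀ n, 1 ≤ n → u (n + 1) = u n ^ γ * β ^ l n) : ∀ n, 1 ≤ n → 0 < u n := by
  intro n hn
  induction n, hn using Nat.le_induction with
  | base => exact hu
  | succ n hn ih => rw [hrec n hn]; exact mul_pos (rpow_pos_of_pos ih γ) (rpow_pos_of_pos hβ _)

lemma le_log_hedge_weight {u l : ℕ → ℝ} (hβ : 0 < β) (hγ : 0 ≤ γ) (hu : 0 < u 1)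
    (hrec : ∀ n, 1 ≤ n → u (n + 1) = u n ^ γ * β ^ l n) (N : ℕ) :
    γ ^ N * log (u 1) - log (1 / β) * discountedSum γ l N ≤ log (u (N + 1)) := by
  have hstep (n : ℕ) (hn : 1 ≤ n) :
      -log (u (n + 1)) ≤ γ * -log (u n) + log (1 / β) * l n := by
    have hun := hedge_weight_pos hβ hu hrec n hn
    rw [hrec n hn, log_mul (rpow_pos_of_pos hun γ).ne' (rpow_pos_of_pos hβ _).ne',
      log_rpow hun, log_rpow hβ, one_div, log_inv]
    linarith
  have h := le_pow_mul_add_discountedSum (ψ := fun n => -log (u n)) hγ hstep N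
  rw [discountedSum_const_mul] at h
  linarith

lemma log_potential_succ_le {ι : Type*} {s : Finset ι} (hs : s.Nonempty) {v v' l : ι → ℝ}
    (hv : ∀ k ∈ s, 0 < v k) (hl : ∀ k ∈ s, l k ∈ Set.Icc (0 : ℝ) 1) (hβ : 0 < β)
    (hγ₀ : 0 < γ) (hγ₁ : γ ≤ 1) (hv' : ∀ k ∈ s, v' k = v k ^ γ * β ^ l k) :
    log (∑ k ∈ s, v' k) - log #s ≤
      γ * (log (∑ k ∈ s, v k) - log #s) - (1 - β) * mixtureLoss s (fun k => v k ^ γ) l := by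
  have hupdate := log_sum_mul_rpow_le hs (v := fun k => v k ^ γ)
    (fun k hk => rpow_pos_of_pos (hv k hk) γ) hl hβ
  have hconcave := log_sum_rpow_le hs hv hγ₀ hγ₁
  rw [sum_congr rfl hv']
  linarith

end Hedge

theorem discounted_hedge_loss_bound_general
    (K : ℕ) (β γ W : ℝ)
    (hβ : β ∈ Set.Ioo (0 : ℝ) 1) (hγ : γ ∈ Set.Ioc (0 : ℝ) 1) (hW : 0 < W)
    (w l : ℕ → ℕ → ℝ)
    (hl : ∀ k ∈ Finset.Icc 1 K, ∀ n, 1 ≤ n → l k n ∈ Set.Icc (0 : ℝ) 1)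
    (hw1 : ∀ k ∈ Finset.Icc 1 K, w k 1 = W)
    (hrec : ∀ k ∈ Finset.Icc 1 K, ∀ n, 1 ≤ n →
      w k (n + 1) = (w k n) ^ γ * β ^ (l k n))
    (kstar : ℕ) (hkstar : kstar ∈ Finset.Icc 1 K)
    (N : ℕ) :
    ∑ n ∈ Finset.Icc 1 N, γ ^ (N - n) *
        ∑ k ∈ Finset.Icc 1 K,
          ((w k n) ^ γ / ∑ j ∈ Finset.Icc 1 K, (w j n) ^ γ) * l k n ≤
      (Real.log (1 / β) / (1 - β)) *
          (∑ n ∈ Finset.Icc 1 N, γ ^ (N - n) * l kstar n) +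
        Real.log K / (1 - β) := by
  obtain ⟨hβ₀, hβ₁⟩ := hβ
  obtain ⟨hγ₀, hγ₁⟩ := hγ
  have hs : (Icc 1 K).Nonempty := ⟨kstar, hkstar⟩
  have hcard : (#(Icc 1 K) : ℝ) = K := by simp
  have hK : (0 : ℝ) < K := hcard ▸ Nat.cast_pos.mpr hs.card_pos
  have hpos (k : ℕ) (hk : k ∈ Icc 1 K) : ∀ n, 1 ≤ n → 0 < w k n :=
    hedge_weight_pos hβ₀ (hw1 k hk ▸ hW) (hrec k hk)
  let predictorLoss (n : ℕ) := mixtureLoss (Icc 1 K) (fun k => w k n ^ γ) (fun k => l k n)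
  let Ψ (n : ℕ) := log (∑ k ∈ Icc 1 K, w k n) - log K
  have hstep (n : ℕ) (hn : 1 ≤ n) : Ψ (n + 1) ≤ γ * Ψ n + -(1 - β) * predictorLoss n := by
    have h := log_potential_succ_le hs (hpos · · n hn) (hl · · n hn) hβ₀ hγ₀ hγ₁
      (hrec · · n hn)
    rw [hcard] at h
    linarith
  have hpotential := le_pow_mul_add_discountedSum (ψ := Ψ) hγ₀.le hstep N
  have hinitial : Ψ 1 = log W := by
    simp only [Ψ]
    rw [sum_congr rfl hw1, sum_const, nsmul_eq_mul, hcard, log_mul hK.ne' hW.ne']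
    ring
  have hbest :=
    le_log_hedge_weight hβ₀ hγ₀.le (hpos kstar hkstar 1 le_rfl) (hrec kstar hkstar) N
  have hdominate : log (w kstar (N + 1)) ≤ log (∑ k ∈ Icc 1 K, w k (N + 1)) :=
    log_le_log (hpos kstar hkstar _ (Nat.le_add_left 1 N))
      (single_le_sum (fun k hk => (hpos k hk _ (Nat.le_add_left 1 N)).le) hkstar)
  rw [hinitial, discountedSum_const_mul] at hpotential
  rw [hw1 kstar hkstar] at hbest
  change discountedSum γ predictorLoss N ≤
    log (1 / β) / (1 - β) * discountedSum γ (l kstar) N + log K / (1 - β)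
  rw [div_mul_eq_mul_div, ← add_div, le_div_iff₀ (sub_pos.mpr hβ₁)]
  linarith

/-- loss bound of Discounted HEDGE against any expert `k*` under the
anti-monotonicity condition:
`L_N(γ) ≤ (ln(1/β)/(1-β)) * L_{k*,N}(γ) + ln K / (1-β)`. -/
theorem discounted_hedge_loss_bound
    (K : ℕ) (hK : 1 ≤ K) (β γ W : ℝ)
    (hβ : β ∈ Set.Ioo (0 : ℝ) 1) (hγ : γ ∈ Set.Ioc (0 : ℝ) 1) (hW : 0 < W)
    (w l : ℕ → ℕ → ℝ)
    (hl : ∀ k ∈ Finset.Icc 1 K, ∀ n, 1 ≤ n → l k n ∈ Set.Icc (0 : ℝ) 1)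
    (hw1 : ∀ k ∈ Finset.Icc 1 K, w k 1 = W)
    (hrec : ∀ k ∈ Finset.Icc 1 K, ∀ n, 1 ≤ n →
      w k (n + 1) = (w k n) ^ γ * β ^ (l k n))
    (hanti : ∀ n, 1 ≤ n → ∀ j ∈ Finset.Icc 1 K, ∀ k ∈ Finset.Icc 1 K,
      w j n ≤ w k n → l k n ≤ l j n)
    (kstar : ℕ) (hkstar : kstar ∈ Finset.Icc 1 K)
    (N : ℕ) (hN : 1 ≤ N) :
    ∑ n ∈ Finset.Icc 1 N, γ ^ (N - n) *
        ∑ k ∈ Finset.Icc 1 K,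
          ((w k n) ^ γ / ∑ j ∈ Finset.Icc 1 K, (w j n) ^ γ) * l k n ≤
      (Real.log (1 / β) / (1 - β)) *
          (∑ n ∈ Finset.Icc 1 N, γ ^ (N - n) * l kstar n) +
        Real.log K / (1 - β) :=
  discounted_hedge_loss_bound_general K β γ W hβ hγ hW w l hl hw1 hrec kstar hkstar N
end

section
/- Consider Discounted HEDGE with K ≥ 2 experts, discounting factor γ = 1, time horizon N ≥ 1, penalty parameter β = 1 / (1 + √(2 · ln K / N)), initial weights w_k[1] = W > 0 for all k, losses l^{(k)}[n] ∈ [0,1], weight recurrence w_k[n+1] = w_k[n] · β^{l^{(k)}[n]}, probabilities p^{(k)}[n] = w_k[n] / Σ_{j=1}^{K} w_j[n], expert losses L_{k,N} = Σ_{n=1}^{N} l^{(k)}[n], and predictor loss L_N = Σ_{n=1}^{N} Σ_{k=1}^{K} p^{(k)}[n] l^{(k)}[n]. Let k* be an expert minimizing L_{k,N}. Then L_N ≤ L_{k*,N} + √(2 · N · ln K) + ln K. -/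
/-!
Exponential weights: the total weight `T n = ∑ₖ w k n` is squeezed from both sides. Since
`β ^ x ≤ 1 - (1 - β) x` on `[0, 1]` and `1 - y ≤ exp (-y)`, each round multiplies it by at
most `exp (-(1 - β) P n)`, where `P n` is the predictor's loss, so
`T (N + 1) ≤ K W exp (-(1 - β) L_N)`; on the other hand it dominates the weight
`W β ^ L_{k,N}` of any single expert. Taking logarithms gives
`(1 - β) L_N ≤ ln K + L_{k,N} ln (1/β)`, and with `β = 1/(1 + a)`, `a = √(2 ln K / N)`,
the bound `ln (1 + a) ≤ a (2 + a) / (2 (1 + a))` together with `L_{k,N} ≤ N` turns this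
into the regret bound.
-/

open Finset Real

namespace Real

lemma log_le_half_sub_inv {x : ℝ} (hx : 1 ≤ x) : log x ≤ (x - x⁻¹) / 2 := by
  simpa [sinh_log (by linarith : 0 < x)] using self_le_sinh_iff.mpr (log_nonneg hx)

lemma rpow_le_one_sub_mul_s13 {β x : ℝ} (hβ : 0 ≤ β) (hx₀ : 0 ≤ x) (hx₁ : x ≤ 1) :
    β ^ x ≤ 1 - (1 - β) * x := by
  have := rpow_one_add_le_one_add_mul_self (by linarith : -1 ≤ β - 1) hx₀ hx₁
  rw [add_sub_cancel] at this
  linarith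

end Real

lemma le_mul_exp_neg_sum_Icc_of_le_mul_exp_neg {T P : ℕ → ℝ}
    (h : ∀ n, 1 ≤ n → T (n + 1) ≤ T n * exp (-P n)) (N : ℕ) :
    T (N + 1) ≤ T 1 * exp (-∑ n ∈ Icc 1 N, P n) := by
  induction N with
  | zero => simp
  | succ N ih =>
    calc T (N + 1 + 1) ≤ T (N + 1) * exp (-P (N + 1)) := h _ le_add_self
      _ ≤ T 1 * exp (-∑ n ∈ Icc 1 N, P n) * exp (-P (N + 1)) := by gcongr
      _ = T 1 * exp (-∑ n ∈ Icc 1 (N + 1), P n) := by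
        rw [sum_Icc_succ_top (by omega), mul_assoc, ← exp_add, neg_add]

section Hedge

variable {ι : Type*} {s : Finset ι} {β : ℝ}

lemma sum_mul_rpow_le_sum_mul_exp {u x : ι → ℝ} (hβ : 0 ≤ β)
    (hu : ∀ k ∈ s, 0 ≤ u k) (hx : ∀ k ∈ s, x k ∈ Set.Icc (0 : ℝ) 1) :
    ∑ k ∈ s, u k * β ^ x k ≤
      (∑ k ∈ s, u k) * exp (-((1 - β) * ∑ k ∈ s, (u k / ∑ j ∈ s, u j) * x k)) := by
  set U := ∑ j ∈ s, u j
  have hU : U * ∑ k ∈ s, (u k / U) * x k = ∑ k ∈ s, u k * x k := by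
    rw [mul_sum]
    refine sum_congr rfl fun k hk => ?_
    rcases eq_or_ne U 0 with hU0 | hU0
    · simp [(sum_eq_zero_iff_of_nonneg hu).mp hU0 k hk]
    · field_simp
  calc ∑ k ∈ s, u k * β ^ x k ≤ ∑ k ∈ s, u k * (1 - (1 - β) * x k) :=
        sum_le_sum fun k hk => mul_le_mul_of_nonneg_left
          (rpow_le_one_sub_mul_s13 hβ (hx k hk).1 (hx k hk).2) (hu k hk)
    _ = U * (1 - (1 - β) * ∑ k ∈ s, (u k / U) * x k) := by
        rw [mul_sub, mul_one, mul_left_comm, hU, mul_sum, ← sum_sub_distrib]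
        exact sum_congr rfl fun k _ => by ring
    _ ≤ U * exp (-((1 - β) * ∑ k ∈ s, (u k / U) * x k)) := by
        gcongr
        · exact sum_nonneg hu
        · linarith [add_one_le_exp (-((1 - β) * ∑ k ∈ s, (u k / U) * x k))]

variable {w l : ι → ℕ → ℝ}

lemma weight_succ_eq {k : ι} (hrec : ∀ n, 1 ≤ n → w k (n + 1) = w k n * β ^ l k n)
    (hβ : 0 < β) (N : ℕ) : w k (N + 1) = w k 1 * β ^ ∑ n ∈ Icc 1 N, l k n := by
  induction N with
  | zero => simp
  | succ N ih =>
    rw [hrec _ le_add_self, ih, sum_Icc_succ_top (by omega), rpow_add hβ, mul_assoc]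

/-- The Freund–Schapire bound, before `β` is tuned. -/
theorem one_sub_mul_hedge_loss_le {W : ℝ} (hW : 0 < W) (hβ : 0 < β)
    (hl : ∀ k ∈ s, ∀ n, 1 ≤ n → l k n ∈ Set.Icc (0 : ℝ) 1)
    (hw1 : ∀ k ∈ s, w k 1 = W)
    (hrec : ∀ k ∈ s, ∀ n, 1 ≤ n → w k (n + 1) = w k n * β ^ l k n)
    {k : ι} (hk : k ∈ s) (N : ℕ) :
    (1 - β) * ∑ n ∈ Icc 1 N, ∑ j ∈ s, (w j n / ∑ i ∈ s, w i n) * l j n ≤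
      log #s - (∑ n ∈ Icc 1 N, l k n) * log β := by
  set S := ∑ n ∈ Icc 1 N, ∑ j ∈ s, (w j n / ∑ i ∈ s, w i n) * l j n
  set L := ∑ n ∈ Icc 1 N, l k n
  have hw : ∀ j ∈ s, ∀ n, w j (n + 1) = W * β ^ ∑ m ∈ Icc 1 n, l j m := fun j hj n => by
    rw [weight_succ_eq (hrec j hj) hβ, hw1 j hj]
  have hw_pos : ∀ n, 1 ≤ n → ∀ j ∈ s, 0 < w j n := fun n hn j hj => by
    obtain ⟨m, rfl⟩ := Nat.exists_eq_add_of_le' hn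
    rw [hw j hj]
    positivity
  have hround : ∀ n, 1 ≤ n → ∑ j ∈ s, w j (n + 1) ≤ (∑ j ∈ s, w j n) *
      exp (-((1 - β) * ∑ j ∈ s, (w j n / ∑ i ∈ s, w i n) * l j n)) := fun n hn => by
    rw [sum_congr rfl fun j hj => hrec j hj n hn]
    exact sum_mul_rpow_le_sum_mul_exp hβ.le (fun j hj => (hw_pos n hn j hj).le)
      fun j hj => hl j hj n hn
  have hsandwich : W * β ^ L ≤ #s * W * exp (-((1 - β) * S)) :=
    calc W * β ^ L = w k (N + 1) := (hw k hk N).symm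
      _ ≤ ∑ j ∈ s, w j (N + 1) :=
        single_le_sum (fun j hj => (hw_pos _ le_add_self j hj).le) hk
      _ ≤ (∑ j ∈ s, w j 1) * exp (-((1 - β) * S)) := by
        have := le_mul_exp_neg_sum_Icc_of_le_mul_exp_neg (T := fun n => ∑ j ∈ s, w j n) hround N
        rwa [← mul_sum] at this
      _ = #s * W * exp (-((1 - β) * S)) := by
        rw [sum_congr rfl hw1, sum_const, nsmul_eq_mul]
  have hs : (0 : ℝ) < #s := by exact_mod_cast card_pos.mpr ⟨k, hk⟩
  have hlog := log_le_log (by positivity) hsandwich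
  rw [log_mul hW.ne' (rpow_pos_of_pos hβ L).ne', log_rpow hβ,
    log_mul (by positivity) (exp_pos _).ne', log_mul hs.ne' hW.ne', log_exp] at hlog
  linarith

end Hedge

/-- The choice `N a² = 2 A` balances the two error terms `A / a` and `N a / 2`. -/
lemma le_add_mul_add_of_mul_le_one_add_mul {a A L N S : ℝ} (ha : 0 < a) (hL₀ : 0 ≤ L)
    (hLN : L ≤ N) (hNa : N * a ^ 2 = 2 * A)
    (h : a * S ≤ (1 + a) * (A + L * log (1 + a))) :
    S ≤ L + N * a + A := by
  have hlog : (1 + a) * log (1 + a) ≤ a + a ^ 2 / 2 := by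
    have h1a : (0 : ℝ) < 1 + a := by linarith
    have := mul_le_mul_of_nonneg_left (log_le_half_sub_inv (by linarith : 1 ≤ 1 + a)) h1a.le
    calc (1 + a) * log (1 + a) ≤ (1 + a) * ((1 + a - (1 + a)⁻¹) / 2) := this
      _ = a + a ^ 2 / 2 := by field_simp; ring
  have : a * S ≤ a * (L + N * a + A) := by
    nlinarith [mul_le_mul_of_nonneg_left hlog hL₀, mul_le_mul_of_nonneg_right hLN (sq_nonneg a)]
  exact le_of_mul_le_mul_left this ha

theorem hedge_regret_bound_general
    (K : ℕ) (hK : 2 ≤ K) (W : ℝ) (hW : 0 < W)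
    (N : ℕ) (hN : 1 ≤ N)
    (β : ℝ) (hβ : β = 1 / (1 + Real.sqrt (2 * Real.log K / N)))
    (w l : ℕ → ℕ → ℝ)
    (hl : ∀ k ∈ Finset.Icc 1 K, ∀ n, 1 ≤ n → l k n ∈ Set.Icc (0 : ℝ) 1)
    (hw1 : ∀ k ∈ Finset.Icc 1 K, w k 1 = W)
    (hrec : ∀ k ∈ Finset.Icc 1 K, ∀ n, 1 ≤ n →
      w k (n + 1) = w k n * β ^ (l k n))
    (kstar : ℕ) (hkstar : kstar ∈ Finset.Icc 1 K) :
    ∑ n ∈ Finset.Icc 1 N,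
        ∑ k ∈ Finset.Icc 1 K,
          (w k n / ∑ j ∈ Finset.Icc 1 K, w j n) * l k n ≤
      (∑ n ∈ Finset.Icc 1 N, l kstar n) +
        Real.sqrt (2 * N * Real.log K) + Real.log K := by
  set S := ∑ n ∈ Icc 1 N, ∑ k ∈ Icc 1 K, (w k n / ∑ j ∈ Icc 1 K, w j n) * l k n
  set L := ∑ n ∈ Icc 1 N, l kstar n
  set a := √(2 * log K / N)
  have hlogK : 0 < log K := log_pos (by exact_mod_cast hK)
  have hN₀ : (0 : ℝ) < N := by exact_mod_cast hN
  have ha : 0 < a := sqrt_pos.mpr (by positivity)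
  have hNa : N * a ^ 2 = 2 * log K := by
    rw [sq_sqrt (by positivity)]
    field_simp
  have hβ₀ : 0 < β := by rw [hβ]; positivity
  have hbound : (1 - β) * S ≤ log #(Icc 1 K) - L * log β :=
    one_sub_mul_hedge_loss_le hW hβ₀ hl hw1 hrec hkstar N
  rw [Nat.card_Icc, Nat.add_sub_cancel, hβ, one_div, log_inv] at hbound
  have hsqrt : √(2 * N * log K) = N * a := by
    rw [show 2 * N * log K = (N * a) ^ 2 by linear_combination (-(N : ℝ)) * hNa,
      sqrt_sq (by positivity)]
  rw [hsqrt]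
  have hL₀ : 0 ≤ L := sum_nonneg fun n hn => (hl _ hkstar n (mem_Icc.mp hn).1).1
  have hLN : L ≤ N :=
    calc L ≤ ∑ n ∈ Icc 1 N, (1 : ℝ) :=
          sum_le_sum fun n hn => (hl _ hkstar n (mem_Icc.mp hn).1).2
      _ = N := by simp
  refine le_add_mul_add_of_mul_le_one_add_mul ha hL₀ hLN hNa ?_
  calc a * S = (1 + a) * ((1 - (1 + a)⁻¹) * S) := by field_simp; ring
    _ ≤ (1 + a) * (log K + L * log (1 + a)) := by gcongr; linarith

/-- the `γ = 1` case (standard HEDGE) with the optimally tuned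
`β = 1/(1 + √(2 ln K / N))`: the predictor loss satisfies
`L_N ≤ L_{k*,N} + √(2 N ln K) + ln K` where `k*` minimizes the cumulative expert loss. -/
theorem hedge_regret_bound
    (K : ℕ) (hK : 2 ≤ K) (W : ℝ) (hW : 0 < W)
    (N : ℕ) (hN : 1 ≤ N)
    (β : ℝ) (hβ : β = 1 / (1 + Real.sqrt (2 * Real.log K / N)))
    (w l : ℕ → ℕ → ℝ)
    (hl : ∀ k ∈ Finset.Icc 1 K, ∀ n, 1 ≤ n → l k n ∈ Set.Icc (0 : ℝ) 1)
    (hw1 : ∀ k ∈ Finset.Icc 1 K, w k 1 = W)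
    (hrec : ∀ k ∈ Finset.Icc 1 K, ∀ n, 1 ≤ n →
      w k (n + 1) = w k n * β ^ (l k n))
    (kstar : ℕ) (hkstar : kstar ∈ Finset.Icc 1 K)
    (hmin : ∀ k ∈ Finset.Icc 1 K,
      ∑ n ∈ Finset.Icc 1 N, l kstar n ≤ ∑ n ∈ Finset.Icc 1 N, l k n) :
    ∑ n ∈ Finset.Icc 1 N,
        ∑ k ∈ Finset.Icc 1 K,
          (w k n / ∑ j ∈ Finset.Icc 1 K, w j n) * l k n ≤
      (∑ n ∈ Finset.Icc 1 N, l kstar n) +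
        Real.sqrt (2 * N * Real.log K) + Real.log K :=
  hedge_regret_bound_general K hK W hW N hN β hβ w l hl hw1 hrec kstar hkstar
end
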